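/- In a finite discounted MDP, let π and π' be stationary policies and s₀ ∈ S a start state. If Σ_{s∈S} d^π_{s₀}(s) Σ_{a∈A} π(a|s) A^{π'}(s,a) > 0, then V^π(s₀) > V^{π'}(s₀); that is, strictly positive occupancy-weighted advantage of π over π' implies strict improvement of π over π' from s₀. -/

import Mathlib

/-!
Write `g = V^π − V` and `Δ = T^π V − V`. Since `V^π = T^π V^π`, `g = Δ + γ P^π g`; pairing with
the state distributions `μ_t` gives `⟨μ_t, g⟩ = ⟨μ_t, Δ⟩ + γ ⟨μ_{t+1}, g⟩`, and the discounted sum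
telescopes to `Σ_t γ^t ⟨μ_t, Δ⟩ = g(s₀)`, i.e. `⟨d^π_{s₀}, Δ⟩ = (1 − γ) (V^π(s₀) − V(s₀))`.
For `V = V^{π'}`, `Δ(s)` is the `π`-average of the advantage `A^{π'}(s, ·)`.
-/

/-- The Bellman operator of a stationary policy `π` in a finite discounted MDP. -/
def Tpol {S A : Type*} [Fintype S] [Fintype A]
    (P : S → A → S → ℝ) (r : S → A → ℝ) (γ : ℝ) (π : S → A → ℝ)
    (V : S → ℝ) : S → ℝ :=
  fun s => ∑ a, π s a * (r s a + γ * ∑ s', P s a s' * V s')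

/-- State distribution after `t` steps of policy `π` started from `s₀`. -/
def muSeq {S A : Type*} [Fintype S] [Fintype A] [DecidableEq S]
    (P : S → A → S → ℝ) (π : S → A → ℝ) (s₀ : S) : ℕ → S → ℝ
  | 0 => fun s => if s = s₀ then 1 else 0
  | t + 1 => fun s' => ∑ s, ∑ a, muSeq P π s₀ t s * π s a * P s a s'

/-- The discounted occupancy measure `d^π_{s₀}(s) = (1−γ) Σ_{t≥0} γ^t μ^π_t(s)`. -/
noncomputable def occ {S A : Type*} [Fintype S] [Fintype A] [DecidableEq S]
    (P : S → A → S → ℝ) (π : S → A → ℝ) (γ : ℝ) (s₀ : S) : S → ℝ :=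
  fun s => (1 - γ) * ∑' t : ℕ, γ ^ t * muSeq P π s₀ t s

theorem hasSum_sub_succ {G : Type*} [AddCommGroup G] [TopologicalSpace G]
    [IsTopologicalAddGroup G] [T2Space G] {u : ℕ → G} (hu : Summable u) :
    HasSum (fun n => u n - u (n + 1)) (u 0) := by
  have h := hu.hasSum.sub ((summable_nat_add_iff 1).mpr hu).hasSum
  rwa [hu.tsum_eq_zero_add, add_sub_cancel_right] at h

def Ppol {S A : Type*} [Fintype S] [Fintype A]
    (P : S → A → S → ℝ) (π : S → A → ℝ) (f : S → ℝ) : S → ℝ :=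
  fun s => ∑ a, π s a * ∑ s', P s a s' * f s'

theorem Tpol_sub_Tpol {S A : Type*} [Fintype S] [Fintype A]
    (P : S → A → S → ℝ) (r : S → A → ℝ) (γ : ℝ) (π : S → A → ℝ) (V W : S → ℝ) (s : S) :
    Tpol P r γ π V s - Tpol P r γ π W s = γ * Ppol P π (V - W) s := by
  rw [Tpol, Tpol, Ppol, ← Finset.sum_sub_distrib, Finset.mul_sum]
  refine Finset.sum_congr rfl fun a _ => ?_
  simp only [Pi.sub_apply, mul_sub, Finset.sum_sub_distrib]
  ring

theorem sum_mul_advantage_eq {S A : Type*} [Fintype S] [Fintype A]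
    (P : S → A → S → ℝ) (r : S → A → ℝ) (γ : ℝ) (π : S → A → ℝ) (hπ1 : ∀ s, ∑ a, π s a = 1)
    (V : S → ℝ) (s : S) :
    ∑ a, π s a * ((r s a + γ * ∑ t, P s a t * V t) - V s) = Tpol P r γ π V s - V s := by
  simp only [Tpol, mul_sub, Finset.sum_sub_distrib, ← Finset.sum_mul, hπ1, one_mul]

section muSeq

variable {S A : Type*} [Fintype S] [Fintype A] [DecidableEq S]
  (P : S → A → S → ℝ) (π : S → A → ℝ) (s₀ : S)

theorem sum_muSeq_succ_mul (t : ℕ) (f : S → ℝ) :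
    ∑ s', muSeq P π s₀ (t + 1) s' * f s' = ∑ s, muSeq P π s₀ t s * Ppol P π f s := by
  simp only [muSeq, Ppol, Finset.sum_mul, Finset.mul_sum]
  rw [Finset.sum_comm]
  refine Finset.sum_congr rfl fun s _ => ?_
  rw [Finset.sum_comm]
  exact Finset.sum_congr rfl fun a _ => Finset.sum_congr rfl fun s' _ => by ring

variable {P π}

theorem muSeq_nonneg (hP0 : ∀ s a s', 0 ≤ P s a s') (hπ0 : ∀ s a, 0 ≤ π s a) (t : ℕ) (s : S) :
    0 ≤ muSeq P π s₀ t s := by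
  induction t generalizing s with
  | zero => simp only [muSeq]; positivity
  | succ t ih =>
    exact Finset.sum_nonneg fun s _ => Finset.sum_nonneg fun a _ =>
      mul_nonneg (mul_nonneg (ih s) (hπ0 s a)) (hP0 s a _)

theorem sum_muSeq_eq_one (hP1 : ∀ s a, ∑ s', P s a s' = 1) (hπ1 : ∀ s, ∑ a, π s a = 1) (t : ℕ) :
    ∑ s, muSeq P π s₀ t s = 1 := by
  induction t with
  | zero => simp [muSeq]
  | succ t ih => simpa [Ppol, hP1, hπ1, ih] using sum_muSeq_succ_mul P π s₀ t 1

theorem muSeq_le_one (hP0 : ∀ s a s', 0 ≤ P s a s') (hP1 : ∀ s a, ∑ s', P s a s' = 1)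
    (hπ0 : ∀ s a, 0 ≤ π s a) (hπ1 : ∀ s, ∑ a, π s a = 1) (t : ℕ) (s : S) :
    muSeq P π s₀ t s ≤ 1 :=
  sum_muSeq_eq_one s₀ hP1 hπ1 t ▸
    Finset.single_le_sum (fun s _ => muSeq_nonneg s₀ hP0 hπ0 t s) (Finset.mem_univ s)

end muSeq

section occ

variable {S A : Type*} [Fintype S] [Fintype A] [DecidableEq S]
  {P : S → A → S → ℝ} {π : S → A → ℝ} {γ : ℝ} (s₀ : S)
  (hP0 : ∀ s a s', 0 ≤ P s a s') (hP1 : ∀ s a, ∑ s', P s a s' = 1)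
  (hγ0 : 0 ≤ γ) (hγ1 : γ < 1)
  (hπ0 : ∀ s a, 0 ≤ π s a) (hπ1 : ∀ s, ∑ a, π s a = 1)
include hP0 hP1 hγ0 hγ1 hπ0 hπ1

theorem summable_pow_mul_muSeq (s : S) : Summable fun t => γ ^ t * muSeq P π s₀ t s :=
  (summable_geometric_of_lt_one hγ0 hγ1).of_nonneg_of_le
    (fun t => mul_nonneg (pow_nonneg hγ0 t) (muSeq_nonneg s₀ hP0 hπ0 t s))
    (fun t => mul_le_of_le_one_right (pow_nonneg hγ0 t) (muSeq_le_one s₀ hP0 hP1 hπ0 hπ1 t s))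

theorem sum_occ_mul (f : S → ℝ) :
    ∑ s, occ P π γ s₀ s * f s = (1 - γ) * ∑' t, γ ^ t * ∑ s, muSeq P π s₀ t s * f s := by
  calc ∑ s, occ P π γ s₀ s * f s = ∑ s, (1 - γ) * ∑' t, γ ^ t * muSeq P π s₀ t s * f s :=
        Finset.sum_congr rfl fun s _ => by rw [occ, mul_assoc, ← tsum_mul_right]
    _ = (1 - γ) * ∑' t, ∑ s, γ ^ t * muSeq P π s₀ t s * f s := by
        rw [← Finset.mul_sum, Summable.tsum_finsetSum fun s _ =>
          (summable_pow_mul_muSeq s₀ hP0 hP1 hγ0 hγ1 hπ0 hπ1 s).mul_right _]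
    _ = (1 - γ) * ∑' t, γ ^ t * ∑ s, muSeq P π s₀ t s * f s := by
        simp only [Finset.mul_sum, mul_assoc]

/-- The performance difference lemma. -/
theorem sum_occ_mul_Tpol_sub {r : S → A → ℝ} {Vπ : S → ℝ} (hVπ : Tpol P r γ π Vπ = Vπ)
    (V : S → ℝ) :
    ∑ s, occ P π γ s₀ s * (Tpol P r γ π V s - V s) = (1 - γ) * (Vπ s₀ - V s₀) := by
  set μ := muSeq P π s₀
  set g := Vπ - V
  set W : ℕ → ℝ := fun t => ∑ s, μ t s * g s
  have hg : ∀ s, g s = (Tpol P r γ π V s - V s) + γ * Ppol P π g s := by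
    intro s
    have := Tpol_sub_Tpol P r γ π Vπ V s
    rw [hVπ] at this
    simp only [g, Pi.sub_apply]
    linarith
  have hrec : ∀ t, W t = ∑ s, μ t s * (Tpol P r γ π V s - V s) + γ * W (t + 1) := by
    intro t
    simp only [W, μ, sum_muSeq_succ_mul, Finset.mul_sum, ← Finset.sum_add_distrib]
    exact Finset.sum_congr rfl fun s _ => by rw [hg s]; ring
  have hstep : ∀ t, γ ^ t * ∑ s, μ t s * (Tpol P r γ π V s - V s)
      = γ ^ t * W t - γ ^ (t + 1) * W (t + 1) := fun t => by rw [hrec t]; ring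
  have hW : Summable fun t => γ ^ t * W t := by
    simp only [W, Finset.mul_sum, ← mul_assoc]
    exact summable_sum fun s _ => (summable_pow_mul_muSeq s₀ hP0 hP1 hγ0 hγ1 hπ0 hπ1 s).mul_right _
  have hW0 : W 0 = g s₀ := by simp [W, μ, muSeq]
  rw [sum_occ_mul s₀ hP0 hP1 hγ0 hγ1 hπ0 hπ1, funext hstep, (hasSum_sub_succ hW).tsum_eq]
  simp [hW0, g]

end occ

theorem stmt10_general {S A : Type*} [Fintype S] [Fintype A]
    [DecidableEq S]
    (P : S → A → S → ℝ) (hP0 : ∀ s a s', 0 ≤ P s a s')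
    (hP1 : ∀ s a, ∑ s', P s a s' = 1)
    (r : S → A → ℝ) (γ : ℝ) (hγ0 : 0 ≤ γ) (hγ1 : γ < 1)
    (π : S → A → ℝ) (hπ0 : ∀ s a, 0 ≤ π s a) (hπ1 : ∀ s, ∑ a, π s a = 1)
    (Vpi : S → ℝ) (hVpi : Tpol P r γ π Vpi = Vpi)
    (Vpi' : S → ℝ)
    (s₀ : S)
    (hpos : 0 < ∑ s, occ P π γ s₀ s *
        ∑ a, π s a * ((r s a + γ * ∑ t, P s a t * Vpi' t) - Vpi' s)) :
    Vpi' s₀ < Vpi s₀ := by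
  simp only [sum_mul_advantage_eq P r γ π hπ1,
    sum_occ_mul_Tpol_sub s₀ hP0 hP1 hγ0 hγ1 hπ0 hπ1 hVpi] at hpos
  linarith [pos_of_mul_pos_right hpos (sub_nonneg.mpr hγ1.le)]

/-- strictly positive occupancy-weighted advantage of `π` over `π'`
implies strict improvement of `π` over `π'` from `s₀`. -/
theorem stmt10 {S A : Type*} [Fintype S] [Fintype A] [Nonempty S] [Nonempty A]
    [DecidableEq S]
    (P : S → A → S → ℝ) (hP0 : ∀ s a s', 0 ≤ P s a s')
    (hP1 : ∀ s a, ∑ s', P s a s' = 1)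
    (r : S → A → ℝ) (γ : ℝ) (hγ0 : 0 ≤ γ) (hγ1 : γ < 1)
    (π : S → A → ℝ) (hπ0 : ∀ s a, 0 ≤ π s a) (hπ1 : ∀ s, ∑ a, π s a = 1)
    (π' : S → A → ℝ) (hπ'0 : ∀ s a, 0 ≤ π' s a) (hπ'1 : ∀ s, ∑ a, π' s a = 1)
    (Vpi : S → ℝ) (hVpi : Tpol P r γ π Vpi = Vpi)
    (Vpi' : S → ℝ) (hVpi' : Tpol P r γ π' Vpi' = Vpi')
    (s₀ : S)
    (hpos : 0 < ∑ s, occ P π γ s₀ s *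
        ∑ a, π s a * ((r s a + γ * ∑ t, P s a t * Vpi' t) - Vpi' s)) :
    Vpi' s₀ < Vpi s₀ :=
  stmt10_general P hP0 hP1 r γ hγ0 hγ1 π hπ0 hπ1 Vpi hVpi Vpi' s₀ hpos
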